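/- Let r_n be an extreme space scale and let β > β_c, α = β_c/β. Then there exist a constant 0 < C < ∞ and n₀ such that for all n ≥ n₀ and all u with 1 ≤ u ≤ b_n(1 - Φ(1/(β√n))), one has g_n(u) ≤ C·u^{-1/α}. -/

import Mathlib

/-!
Write `a_n = log r_n / (β√n)`, so that `1 - Φ(a_n) = 1 / b_n`, and `B_n = β_c √n`, so that
`φ(λ B_n) ≍ 2^{-λ² n}`. Since `b_n ≍ 2^n`, the Mills-ratio bounds
`e^{-3/2} φ(x)/x ≤ 1 - Φ(x) ≤ φ(x)/x` (for `x ≥ 1`) place `a_n` in `[5B_n/6, B_n]`.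
For `1 ≤ u ≤ b_n` put `t = log u / B_n ≤ 2a_n/3`: the point `v = e^{6β/β_c} r_n u^{-β/β_c}` has
`log v / (β√n) = a_n - t + 6/B_n`, and comparing Gaussian densities at `a_n - t + 6/B_n` and `a_n`
with the same Mills-ratio bounds gives `1 - Φ(a_n - t + 6/B_n) ≤ e^{B_n t} (1 - Φ(a_n)) = u / b_n`,
hence `G_n^{-1}(u/b_n) ≤ v`.
-/

open Filter MeasureTheory

/-- The standard Gaussian density `φ(x) = (2π)^{-1/2} e^{-x²/2}`. -/
noncomputable def phi (x : ℝ) : ℝ := (Real.sqrt (2 * Real.pi))⁻¹ * Real.exp (-x ^ 2 / 2)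

/-- The standard Gaussian distribution function `Φ(x) = ∫_{-∞}^x φ(y) dy`. -/
noncomputable def Phi (x : ℝ) : ℝ := ∫ y in Set.Iic x, phi y

/-- `G_n^{-1}(u) = inf {v ≥ 0 : G_n(v) ≤ u}` where `G_n(v) = 1 - Φ(log v/(β√n))`. -/
noncomputable def Ginv (β : ℝ) (n : ℕ) (u : ℝ) : ℝ :=
  sInf {v : ℝ | 0 ≤ v ∧ 1 - Phi (Real.log v / (β * Real.sqrt n)) ≤ u}

open Real ProbabilityTheory

local notation "β_c" => √(2 * log 2)

lemma phi_eq_gaussianPDFReal : phi = gaussianPDFReal 0 1 := by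
  ext x
  simp [phi, gaussianPDFReal, neg_div]

lemma phi_pos (x : ℝ) : 0 < phi x :=
  phi_eq_gaussianPDFReal ▸ gaussianPDFReal_pos 0 1 x one_ne_zero

lemma integrable_phi : Integrable phi :=
  phi_eq_gaussianPDFReal ▸ integrable_gaussianPDFReal 0 1

lemma one_sub_Phi_eq_integral_Ioi (x : ℝ) : 1 - Phi x = ∫ y in Set.Ioi x, phi y := by
  rw [Phi, ← integral_gaussianPDFReal_eq_one 0 one_ne_zero, ← phi_eq_gaussianPDFReal,
    ← intervalIntegral.integral_Iic_add_Ioi integrable_phi.integrableOn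
      integrable_phi.integrableOn, add_sub_cancel_left]

lemma setIntegral_phi_pos {s : Set ℝ} (hs0 : volume s ≠ 0) :
    0 < ∫ y in s, phi y := by
  rw [setIntegral_pos_iff_support_of_nonneg_ae (ae_of_all _ fun y => (phi_pos y).le)
    integrable_phi.integrableOn, Function.support_eq_univ fun y => (phi_pos y).ne',
    Set.univ_inter]
  exact pos_iff_ne_zero.2 hs0

lemma Phi_strictMono : StrictMono Phi := by
  intro x y hxy
  have hpos : 0 < ∫ z in Set.Ioc x y, phi z :=
    setIntegral_phi_pos (by simpa [Real.volume_Ioc] using hxy)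
  rw [Phi, Phi, ← Set.Iic_union_Ioc_eq_Iic hxy.le, setIntegral_union (Set.Iic_disjoint_Ioc le_rfl)
    measurableSet_Ioc integrable_phi.integrableOn integrable_phi.integrableOn]
  linarith

lemma Phi_nonneg (x : ℝ) : 0 ≤ Phi x :=
  setIntegral_nonneg measurableSet_Iic fun y _ => (phi_pos y).le

lemma one_sub_Phi_pos (x : ℝ) : 0 < 1 - Phi x :=
  one_sub_Phi_eq_integral_Ioi x ▸ setIntegral_phi_pos (by simp)

lemma pos_of_one_sub_Phi_eq_inv {a b : ℝ} (h : 1 - Phi a = b⁻¹) : 0 < b :=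
  inv_pos.1 (h ▸ one_sub_Phi_pos a)

lemma hasDerivAt_phi (y : ℝ) : HasDerivAt phi (-(y * phi y)) y := by
  have h : HasDerivAt (fun z : ℝ => -z ^ 2 / 2) (-y) y :=
    ((hasDerivAt_pow 2 y).neg.div_const 2).congr_deriv (by norm_num; ring)
  exact (h.exp.const_mul (√(2 * π))⁻¹).congr_deriv (by simp only [phi]; ring)

lemma tendsto_phi_atTop : Tendsto phi atTop (nhds 0) := by
  have h : Tendsto (fun z : ℝ => -z ^ 2 / 2) atTop atBot :=
    (tendsto_neg_atBot_iff.2 (tendsto_pow_atTop two_ne_zero)).atBot_div_const two_pos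
  have h' := (tendsto_exp_atBot.comp h).const_mul (√(2 * π))⁻¹
  rwa [mul_zero] at h'

lemma integrable_mul_phi : Integrable fun y => y * phi y := by
  refine ((integrable_mul_exp_neg_mul_sq (b := 2⁻¹) (by norm_num)).const_mul
    (√(2 * π))⁻¹).congr (ae_of_all _ fun y => ?_)
  simp only [phi]; ring_nf

lemma integral_Ioi_mul_phi (x : ℝ) : ∫ y in Set.Ioi x, y * phi y = phi x := by
  simpa using integral_Ioi_of_hasDerivAt_of_tendsto' (a := x)
    (fun y _ => (hasDerivAt_phi y).neg) (by simpa using integrable_mul_phi.integrableOn)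
    tendsto_phi_atTop.neg

lemma one_sub_Phi_le_phi_div {x : ℝ} (hx : 0 < x) : 1 - Phi x ≤ phi x / x := by
  rw [one_sub_Phi_eq_integral_Ioi, div_eq_inv_mul, ← integral_Ioi_mul_phi, ← integral_const_mul]
  refine setIntegral_mono_on integrable_phi.integrableOn
    (integrable_mul_phi.const_mul _).integrableOn measurableSet_Ioi fun y hy => ?_
  rw [← mul_assoc]
  exact le_mul_of_one_le_left (phi_pos y).le ((one_le_inv_mul₀ hx).2 (le_of_lt hy))

lemma exp_neg_three_halves_mul_phi_div_le {x : ℝ} (hx : 1 ≤ x) :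
    exp (-(3 / 2)) * (phi x / x) ≤ 1 - Phi x := by
  have hx0 : 0 < x := by linarith
  have hxinv : x⁻¹ ≤ 1 := inv_le_one_of_one_le₀ hx
  -- on `(x, x + 1/x]` we have `y² - x² ≤ 2 + 1/x² ≤ 3`
  have hphi : ∀ y ∈ Set.Ioc x (x + x⁻¹), exp (-(3 / 2)) * phi x ≤ phi y := fun y hy => by
    simp only [phi]
    rw [mul_left_comm, ← exp_add]
    gcongr
    nlinarith [hy.1, hy.2, mul_inv_cancel₀ hx0.ne']
  calc exp (-(3 / 2)) * (phi x / x)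
      = volume.real (Set.Ioc x (x + x⁻¹)) • (exp (-(3 / 2)) * phi x) := by
        simp [Measure.real, Real.volume_Ioc, inv_nonneg.2 hx0.le, div_eq_mul_inv]; ring
    _ ≤ ∫ y in Set.Ioc x (x + x⁻¹), phi y :=
        setIntegral_ge_of_const_le measurableSet_Ioc (by simp [Real.volume_Ioc]) hphi
          integrable_phi.integrableOn
    _ ≤ ∫ y in Set.Ioi x, phi y :=
        setIntegral_mono_set integrable_phi.integrableOn
          (ae_of_all _ fun y => (phi_pos y).le) Set.Ioc_subset_Ioi_self.eventuallyLE
    _ = 1 - Phi x := (one_sub_Phi_eq_integral_Ioi x).symm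

lemma one_sub_Phi_le_exp_mul_one_sub_Phi {a x L : ℝ} (ha : 1 ≤ a) (hax : a ≤ 3 * x)
    (hL : (a ^ 2 - x ^ 2) / 2 ≤ L - 3) : 1 - Phi x ≤ exp L * (1 - Phi a) := by
  have ha0 : 0 < a := by linarith
  have hx0 : 0 < x := by linarith
  have hphi : phi x = exp ((a ^ 2 - x ^ 2) / 2) * phi a := by
    simp only [phi]
    rw [mul_left_comm, ← exp_add]
    ring_nf
  -- `3 ≤ e^{3/2}`, via `e^{3/4} ≥ 7/4`
  have h3 : 3 * exp (-3) ≤ exp (-(3 / 2)) := by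
    have h : 7 / 4 ≤ exp (3 / 4) := by linarith [add_one_le_exp (3 / 4 : ℝ)]
    have h' : exp (-(3 / 2)) = exp (3 / 4) * exp (3 / 4) * exp (-3) := by
      rw [← exp_add, ← exp_add]; norm_num
    rw [h']
    gcongr
    nlinarith
  calc 1 - Phi x ≤ phi x / x := one_sub_Phi_le_phi_div hx0
    _ = exp ((a ^ 2 - x ^ 2) / 2) * phi a / x := by rw [hphi]
    _ ≤ exp (L - 3) * phi a / (a / 3) := by
        gcongr
        · exact mul_nonneg (exp_pos _).le (phi_pos a).le
        · exact (phi_pos a).le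
        · linarith
    _ = exp L * (3 * exp (-3)) * (phi a / a) := by
        rw [sub_eq_add_neg, exp_add]; field_simp
    _ ≤ exp L * exp (-(3 / 2)) * (phi a / a) := by gcongr; exact (div_pos (phi_pos a) ha0).le
    _ ≤ exp L * (1 - Phi a) := by
        rw [mul_assoc]; gcongr; exact exp_neg_three_halves_mul_phi_div_le ha

lemma one_sub_Phi_sub_add_le {a B t : ℝ} (ha : 1 ≤ a) (haB : a ≤ B) (hBa : B ≤ 2 * a)
    (ht : 0 ≤ t) (hta : 3 * t ≤ 2 * a) :
    1 - Phi (a - t + 6 / B) ≤ exp (B * t) * (1 - Phi a) := by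
  have hB : 0 < B := by linarith
  have he : 0 < 6 / B := by positivity
  have hae : 3 ≤ a * (6 / B) := by
    have : B * (6 / B) = 6 := mul_div_cancel₀ 6 hB.ne'
    nlinarith
  apply one_sub_Phi_le_exp_mul_one_sub_Phi ha (by linarith)
  nlinarith [sq_nonneg (t - 6 / B), mul_le_mul_of_nonneg_right haB ht]

lemma Ginv_le {β : ℝ} {n : ℕ} {w v : ℝ} (hv : 0 ≤ v)
    (h : 1 - Phi (log v / (β * √n)) ≤ w) : Ginv β n w ≤ v :=
  csInf_le ⟨0, fun _ hy => hy.1⟩ ⟨hv, h⟩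

lemma exp_inv_mul_Ginv_le {β a B b u : ℝ} {n : ℕ} (hβ : 0 < β) (hn : n ≠ 0)
    (hb : 1 - Phi a = b⁻¹) (ha : 1 ≤ a) (haB : a ≤ B) (hBa : B ≤ 2 * a)
    (hlogb : 3 * log b ≤ 2 * a * B) (hu : 1 ≤ u) (hub : u ≤ b) :
    (exp (a * (β * √n)))⁻¹ * Ginv β n (u / b) ≤
      exp (6 * (β * √n / B)) * u ^ (-(β * √n / B)) := by
  have hB : 0 < B := by linarith
  have hs : 0 < β * √n := by positivity
  have hu0 : 0 < u := by linarith
  set q := β * √n / B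
  set t := log u / B
  have hBt : B * t = log u := mul_div_cancel₀ _ hB.ne'
  have hta : 3 * t ≤ 2 * a := by
    have h := (mul_le_mul_of_nonneg_left (log_le_log hu0 hub) zero_le_three).trans hlogb
    rw [← hBt] at h
    nlinarith
  set v := exp (6 * q) * exp (a * (β * √n)) * u ^ (-q)
  have hv : log v / (β * √n) = a - t + 6 / B := by
    rw [log_mul (by positivity) (by positivity), log_mul (by positivity) (by positivity),
      log_exp, log_exp, log_rpow hu0]
    simp only [q, t]
    field_simp
    ring
  have hGinv : Ginv β n (u / b) ≤ v := by
    refine Ginv_le (by positivity) ?_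
    rw [hv, div_eq_mul_inv u b, ← hb, ← exp_log hu0, ← hBt]
    exact one_sub_Phi_sub_add_le ha haB hBa (div_nonneg (log_nonneg hu) hB.le) hta
  calc (exp (a * (β * √n)))⁻¹ * Ginv β n (u / b) ≤ (exp (a * (β * √n)))⁻¹ * v := by gcongr
    _ = exp (6 * q) * u ^ (-q) := by
        simp only [v]
        field_simp

lemma exp_mul_log_two (n : ℕ) : exp (n * log 2) = 2 ^ n := by
  rw [exp_nat_mul, exp_log two_pos]

lemma phi_mul_sqrt_two_log_two_mul (l : ℝ) (n : ℕ) :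
    phi (l * (β_c * √n)) = (√(2 * π))⁻¹ * exp (-(l ^ 2 * (n * log 2))) := by
  simp only [phi, mul_pow, sq_sqrt (Nat.cast_nonneg n),
    sq_sqrt (by positivity : (0 : ℝ) ≤ 2 * log 2)]
  ring_nf

lemma tendsto_sqrt_two_log_two_mul_sqrt : Tendsto (fun n : ℕ => β_c * √n) atTop atTop :=
  (tendsto_sqrt_atTop.comp tendsto_natCast_atTop_atTop).const_mul_atTop (by positivity)

lemma eventually_mul_sqrt_le_mul_exp (K : ℝ) {C k : ℝ} (hC : 0 < C) (hk : 0 < k) :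
    ∀ᶠ n : ℕ in atTop, K * √n ≤ C * exp (k * n) := by
  filter_upwards [tendsto_natCast_atTop_atTop.eventually
    (((isLittleO_rpow_exp_pos_mul_atTop (1 / 2) hk).const_mul_left K).def hC)] with n hn
  rw [← sqrt_eq_rpow, norm_of_nonneg (exp_pos _).le] at hn
  exact (le_abs_self _).trans hn

lemma eventually_le_sqrt_two_log_two_mul {a b : ℕ → ℝ} {K : ℝ}
    (hab : ∀ n, 1 - Phi (a n) = (b n)⁻¹) (hb : ∀ᶠ n in atTop, b n ≤ K * 2 ^ n) :
    ∀ᶠ n in atTop, a n ≤ β_c * √n := by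
  filter_upwards [hb, tendsto_sqrt_two_log_two_mul_sqrt.eventually_ge_atTop (max K 1)]
    with n hbn hBK
  have hB : 0 < β_c * √n := lt_of_lt_of_le one_pos (le_of_max_le_right hBK)
  have hphi : phi (β_c * √n) ≤ (2 ^ n)⁻¹ := by
    have h := phi_mul_sqrt_two_log_two_mul 1 n
    rw [one_mul, one_pow, one_mul, exp_neg, exp_mul_log_two] at h
    rw [h]
    refine mul_le_of_le_one_left (by positivity) (inv_le_one_of_one_le₀ ?_)
    rw [one_le_sqrt]; linarith [pi_gt_three]
  refine Phi_strictMono.le_iff_le.1 (sub_le_sub_iff_left 1 |>.1 ?_)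
  calc 1 - Phi (β_c * √n) ≤ phi (β_c * √n) / (β_c * √n) := one_sub_Phi_le_phi_div hB
    _ ≤ (2 ^ n)⁻¹ / (β_c * √n) := by gcongr
    _ = (β_c * √n * 2 ^ n)⁻¹ := by rw [mul_inv, div_eq_mul_inv, mul_comm]
    _ ≤ (b n)⁻¹ := by
        gcongr
        · exact pos_of_one_sub_Phi_eq_inv (hab n)
        exact hbn.trans (by gcongr; exact le_of_max_le_left hBK)
    _ = 1 - Phi (a n) := (hab n).symm

lemma eventually_mul_sqrt_two_log_two_mul_le {a b : ℕ → ℝ} {c l : ℝ} (hc : 0 < c) (hl0 : 0 < l)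
    (hl1 : l < 1) (hab : ∀ n, 1 - Phi (a n) = (b n)⁻¹)
    (hb : ∀ᶠ n in atTop, c * 2 ^ n ≤ b n) :
    ∀ᶠ n : ℕ in atTop, l * (β_c * √n) ≤ a n := by
  set P := exp (-(3 / 2)) * (√(2 * π))⁻¹
  have hP : 0 < P := by positivity
  have hk : 0 < (1 - l ^ 2) * log 2 := by
    have : l ^ 2 < 1 := by nlinarith
    have := log_pos one_lt_two
    nlinarith
  filter_upwards [hb, eventually_mul_sqrt_le_mul_exp (l * β_c) (mul_pos hP hc) hk,
    tendsto_sqrt_two_log_two_mul_sqrt.eventually_ge_atTop l⁻¹] with n hbn hexp hBl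
  have hy : 1 ≤ l * (β_c * √n) := by rwa [← inv_mul_le_iff₀ hl0, mul_one]
  refine Phi_strictMono.le_iff_le.1 (sub_le_sub_iff_left 1 |>.1 ?_)
  rw [hab]
  refine le_trans ?_ (exp_neg_three_halves_mul_phi_div_le hy)
  have hy0 : 0 < l * (β_c * √n) := one_pos.trans_le hy
  calc (b n)⁻¹ ≤ (c * exp (n * log 2))⁻¹ := by rw [exp_mul_log_two]; gcongr
    _ = P * exp (-(l ^ 2 * (n * log 2))) / (P * c * exp ((1 - l ^ 2) * log 2 * n)) := by
        rw [show (1 - l ^ 2) * log 2 * n = n * log 2 + -(l ^ 2 * (n * log 2)) by ring, exp_add]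
        field_simp
    _ ≤ P * exp (-(l ^ 2 * (n * log 2))) / (l * (β_c * √n)) := by
        refine div_le_div_of_nonneg_left (by positivity) hy0 ?_
        rw [← mul_assoc]; exact hexp
    _ = exp (-(3 / 2)) * (phi (l * (β_c * √n)) / (l * (β_c * √n))) := by
        rw [phi_mul_sqrt_two_log_two_mul]; ring

lemma eventually_le_mul_and_le_mul_of_tendsto_div {f g : ℕ → ℝ} {ε' : ℝ} (hε' : 0 < ε')
    (hg : ∀ n, 0 < g n) (h : Tendsto (fun n => f n / g n) atTop (nhds ε')) :
    ∀ᶠ n in atTop, ε' / 2 * g n ≤ f n ∧ f n ≤ 2 * ε' * g n := by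
  filter_upwards [h.eventually (Ioo_mem_nhds (half_lt_self hε') (by linarith : ε' < 2 * ε'))]
    with n hn
  rw [lt_div_iff₀ (hg n), div_lt_iff₀ (hg n)] at hn
  exact ⟨hn.1.le, hn.2.le⟩

lemma eventually_quantile_bounds {a b : ℕ → ℝ} {ε' : ℝ} (hε' : 0 < ε')
    (hab : ∀ n, 1 - Phi (a n) = (b n)⁻¹) (hb : Tendsto (fun n => b n / 2 ^ n) atTop (nhds ε')) :
    ∀ᶠ n : ℕ in atTop, 1 ≤ a n ∧ a n ≤ β_c * √n ∧ β_c * √n ≤ 2 * a n ∧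
      3 * log (b n) ≤ 2 * a n * (β_c * √n) := by
  have hbnd := eventually_le_mul_and_le_mul_of_tendsto_div hε' (fun n => by positivity) hb
  filter_upwards [hbnd, eventually_le_sqrt_two_log_two_mul hab (hbnd.mono fun _ h => h.2),
    eventually_mul_sqrt_two_log_two_mul_le (l := 5 / 6) (by positivity) (by norm_num)
      (by norm_num) hab (hbnd.mono fun _ h => h.1),
    tendsto_sqrt_two_log_two_mul_sqrt.eventually_ge_atTop (max 2 (9 * log (2 * ε')))]
    with n ⟨hb1, hb2⟩ hup hlow hB
  have hB2 : 2 ≤ β_c * √n := le_of_max_le_left hB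
  have hBε : 9 * log (2 * ε') ≤ β_c * √n := le_of_max_le_right hB
  have hBsq : (β_c * √n) ^ 2 = 2 * (n * log 2) := by
    rw [mul_pow, sq_sqrt (by positivity), sq_sqrt (Nat.cast_nonneg n)]; ring
  have hlogb : log (b n) ≤ log (2 * ε') + n * log 2 := by
    rw [← log_exp (n * log 2), exp_mul_log_two, ← log_mul (by positivity) (by positivity)]
    exact log_le_log (pos_of_one_sub_Phi_eq_inv (hab n)) hb2
  refine ⟨by nlinarith, hup, by linarith, by nlinarith⟩

theorem gn_upper_bound_extreme_general (β : ℝ) (hβ : Real.sqrt (2 * Real.log 2) < β)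
    (ε' : ℝ) (hε'0 : 0 < ε')
    (r b : ℕ → ℝ)
    (hr : Tendsto r atTop atTop)
    (hb_def : ∀ n : ℕ, b n * (1 - Phi (Real.log (r n) / (β * Real.sqrt n))) = 1)
    (hext : Tendsto (fun n : ℕ => (2 : ℝ) ^ (Real.log (b n) / Real.log 2) / 2 ^ n)
      atTop (nhds ε')) :
    ∃ C : ℝ, 0 < C ∧ ∃ n₀ : ℕ, ∀ n ≥ n₀, ∀ u : ℝ,
      1 ≤ u → u ≤ b n * (1 - Phi (1 / (β * Real.sqrt n))) →
      (r n)⁻¹ * Ginv β n (u / b n) ≤ C * u ^ (-(β / Real.sqrt (2 * Real.log 2))) := by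
  have hβ0 : 0 < β := (sqrt_nonneg _).trans_lt hβ
  have hab (n : ℕ) : 1 - Phi (log (r n) / (β * √n)) = (b n)⁻¹ :=
    eq_inv_of_mul_eq_one_right (hb_def n)
  have hb : Tendsto (fun n => b n / 2 ^ n) atTop (nhds ε') := hext.congr fun n => by
    rw [log_div_log, rpow_logb two_pos one_lt_two.ne' (pos_of_one_sub_Phi_eq_inv (hab n))]
  refine ⟨exp (6 * (β / β_c)), exp_pos _, ?_⟩
  obtain ⟨n₀, hn₀⟩ := eventually_atTop.1 (((hr.eventually_gt_atTop 0).and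
    (eventually_quantile_bounds hε'0 hab hb)).and (eventually_ne_atTop 0))
  refine ⟨n₀, fun n hn u hu1 hu2 => ?_⟩
  obtain ⟨⟨hrn, ha1, haB, hBa, hlogb⟩, hn0⟩ := hn₀ n hn
  have hsqrt : 0 < √(n : ℝ) := sqrt_pos.2 (Nat.cast_pos.2 (Nat.pos_of_ne_zero hn0))
  have hub : u ≤ b n := hu2.trans (mul_le_of_le_one_right
    (pos_of_one_sub_Phi_eq_inv (hab n)).le (by linarith [Phi_nonneg (1 / (β * √n))]))
  have hr_eq : r n = exp (log (r n) / (β * √n) * (β * √n)) := by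
    rw [div_mul_cancel₀ _ (by positivity), exp_log hrn]
  rw [hr_eq, ← mul_div_mul_right β β_c hsqrt.ne']
  exact exp_inv_mul_Ginv_le hβ0 hn0 (hab n) ha1 haB hBa hlogb hu1 hub

/-- Let `r_n` be an extreme space scale (`2^{m_n}/2^n → ε' ∈ (0,1]`) and `β > β_c = √(2 log 2)`,
`α = β_c/β`.  Then there are `0 < C < ∞` and `n₀` such that for all `n ≥ n₀` and all
`1 ≤ u ≤ b_n(1 - Φ(1/(β√n)))`, `g_n(u) = r_n⁻¹ G_n^{-1}(u/b_n) ≤ C u^{-1/α}`. -/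
theorem gn_upper_bound_extreme (β : ℝ) (hβ : Real.sqrt (2 * Real.log 2) < β)
    (ε' : ℝ) (hε'0 : 0 < ε') (hε'1 : ε' ≤ 1)
    (r b : ℕ → ℝ)
    (hr : Tendsto r atTop atTop)
    (hb_def : ∀ n : ℕ, b n * (1 - Phi (Real.log (r n) / (β * Real.sqrt n))) = 1)
    (hext : Tendsto (fun n : ℕ => (2 : ℝ) ^ (Real.log (b n) / Real.log 2) / 2 ^ n)
      atTop (nhds ε')) :
    ∃ C : ℝ, 0 < C ∧ ∃ n₀ : ℕ, ∀ n ≥ n₀, ∀ u : ℝ,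
      1 ≤ u → u ≤ b n * (1 - Phi (1 / (β * Real.sqrt n))) →
      (r n)⁻¹ * Ginv β n (u / b n) ≤ C * u ^ (-(β / Real.sqrt (2 * Real.log 2))) :=
  gn_upper_bound_extreme_general β hβ ε' hε'0 r b hr hb_def hext
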